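/- The function f₁(x) = 1/(ln(x) - ψ(x)) - 2x is strictly decreasing on (1, ∞). -/

import Mathlib

/-!
Write `L x = log x - ψ x` and `T x = ψ' x - 1 / x`. The derivative of the function is
`T / L² - 2`, so the claim is `T < 2 L²` on `(1, ∞)`.

Convexity of `log Γ` gives `0 ≤ L x ≤ 1 / x`, and `ψ (x + 1) = ψ x + 1 / x` turns `L` into the
telescoping series `L x = ∑ₙ a (x + n)` with `a y = 1 / y - log (1 + 1 / y) ≥ 0`. Since
`a' y = -1 / (y² (y + 1))`, differentiating term by term shows that `ψ` is differentiable and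
`T x = ∑ₙ 1 / ((x + n)² (x + n + 1))`. Comparing these series increment by increment with explicit
rational functions bounds `L` from below (through a Padé bound for `log (1 + u)`) and `T` from
above, and the two rational bounds satisfy the required inequality.
-/

open Real Filter Topology Set

noncomputable def digamma (x : ℝ) : ℝ := deriv Real.Gamma x / Real.Gamma x

noncomputable def trigamma (x : ℝ) : ℝ := deriv digamma x

section Telescoping

variable {f g : ℝ → ℝ} {x : ℝ}

lemma tendsto_comp_add_nat_of_le_one_div (h0 : ∀ t, x ≤ t → 0 ≤ f t)
    (h1 : ∀ t, x ≤ t → f t ≤ 1 / t) : Tendsto (fun n : ℕ => f (x + n)) atTop (𝓝 0) := by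
  have hx : ∀ n : ℕ, x ≤ x + n := fun n => le_add_of_nonneg_right n.cast_nonneg
  refine squeeze_zero (fun n => h0 _ (hx n)) (fun n => h1 _ (hx n)) ?_
  simp only [one_div]
  exact (tendsto_atTop_add_const_left _ x tendsto_natCast_atTop_atTop).inv_tendsto_atTop

lemma hasSum_sub_add_one (hf : ∀ n : ℕ, f (x + n + 1) ≤ f (x + n))
    (hlim : Tendsto (fun n : ℕ => f (x + n)) atTop (𝓝 0)) :
    HasSum (fun n : ℕ => f (x + n) - f (x + n + 1)) (f x) := by
  have hsucc : ∀ n : ℕ, x + ((n + 1 : ℕ) : ℝ) = x + n + 1 := fun n => by push_cast; ring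
  rw [hasSum_iff_tendsto_nat_of_nonneg (fun n => sub_nonneg.2 (hf n))]
  simp_rw [← hsucc, Finset.sum_range_sub' (fun n : ℕ => f (x + n))]
  simpa using tendsto_const_nhds.sub hlim

lemma le_of_sub_add_one_le_sub_add_one
    (hstep : ∀ n : ℕ, f (x + n) - f (x + n + 1) ≤ g (x + n) - g (x + n + 1))
    (hf : Tendsto (fun n : ℕ => f (x + n)) atTop (𝓝 0))
    (hg : Tendsto (fun n : ℕ => g (x + n)) atTop (𝓝 0)) : f x ≤ g x := by
  have hsucc : ∀ n : ℕ, x + ((n + 1 : ℕ) : ℝ) = x + n + 1 := fun n => by push_cast; ring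
  have hanti : Antitone fun n : ℕ => g (x + n) - f (x + n) :=
    antitone_nat_of_succ_le fun n => by rw [hsucc]; linarith [hstep n]
  have := hanti.le_of_tendsto (by simpa using hg.sub hf) 0
  simp only [CharP.cast_eq_zero, add_zero] at this
  linarith

end Telescoping

section Digamma

variable {x : ℝ}

lemma hasDerivAt_log_Gamma (hx : 0 < x) : HasDerivAt (log ∘ Gamma) (digamma x) x :=
  (Real.differentiableOn_Gamma_Ioi.differentiableAt (Ioi_mem_nhds hx)).hasDerivAt.log
    (Gamma_pos_of_pos hx).ne'

lemma digamma_add_one (hx : 0 < x) : digamma (x + 1) = digamma x + 1 / x := by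
  have hshift : HasDerivAt (fun y => log (Gamma (y + 1))) (digamma (x + 1)) x :=
    (hasDerivAt_log_Gamma (by linarith)).comp_add_const x 1
  have hsplit : HasDerivAt (fun y => log y + log (Gamma y)) (x⁻¹ + digamma x) x :=
    (hasDerivAt_log hx.ne').add (hasDerivAt_log_Gamma hx)
  have heq : (fun y => log (Gamma (y + 1))) =ᶠ[𝓝 x] fun y => log y + log (Gamma y) := by
    filter_upwards [Ioi_mem_nhds hx] with y hy
    rw [Gamma_add_one (ne_of_gt hy), log_mul (ne_of_gt hy) (Gamma_pos_of_pos hy).ne']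
  rw [hshift.unique (hsplit.congr_of_eventuallyEq heq), one_div, add_comm]

lemma slope_log_Gamma_add_one (hx : 0 < x) : slope (log ∘ Gamma) x (x + 1) = log x := by
  rw [slope_def_field, add_sub_cancel_left, div_one, Function.comp_apply, Function.comp_apply,
    Gamma_add_one hx.ne', log_mul hx.ne' (Gamma_pos_of_pos hx).ne', add_sub_cancel_right]

lemma log_sub_digamma_nonneg (hx : 0 < x) : 0 ≤ log x - digamma x := by
  have hd := hasDerivAt_log_Gamma hx
  have := convexOn_log_Gamma.deriv_le_slope hx (by simp; linarith) (lt_add_one x)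
    hd.differentiableAt
  rw [hd.deriv, slope_log_Gamma_add_one hx] at this
  linarith

lemma log_sub_digamma_le (hx : 0 < x) : log x - digamma x ≤ 1 / x := by
  have hd := hasDerivAt_log_Gamma (by linarith : 0 < x + 1)
  have := convexOn_log_Gamma.slope_le_deriv hx (by simp; linarith) (lt_add_one x)
    hd.differentiableAt
  rw [hd.deriv, slope_log_Gamma_add_one hx, digamma_add_one hx] at this
  linarith

end Digamma

section Series

variable {x : ℝ}

lemma log_sub_digamma_sub_add_one (hx : 0 < x) :
    (log x - digamma x) - (log (x + 1) - digamma (x + 1)) = 1 / x - log (1 + 1 / x) := by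
  rw [digamma_add_one hx, show 1 + 1 / x = (x + 1) / x by field_simp,
    log_div (by linarith) hx.ne']
  ring

lemma one_div_sub_log_one_add_one_div_nonneg (hx : 0 < x) : 0 ≤ 1 / x - log (1 + 1 / x) := by
  linarith [log_le_sub_one_of_pos (by positivity : 0 < 1 + 1 / x)]

lemma hasSum_log_sub_digamma (hx : 0 < x) :
    HasSum (fun n : ℕ => 1 / (x + n) - log (1 + 1 / (x + n))) (log x - digamma x) := by
  have hpos : ∀ n : ℕ, 0 < x + n := fun n => by positivity
  convert hasSum_sub_add_one (f := fun t => log t - digamma t)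
    (fun n => by linarith [one_div_sub_log_one_add_one_div_nonneg (hpos n),
      log_sub_digamma_sub_add_one (hpos n)])
    (tendsto_comp_add_nat_of_le_one_div (fun t ht => log_sub_digamma_nonneg (by linarith))
      (fun t ht => log_sub_digamma_le (by linarith))) using 2 with n
  exact (log_sub_digamma_sub_add_one (hpos n)).symm

lemma hasDerivAt_one_div_sub_log_one_add_one_div (hx : 0 < x) :
    HasDerivAt (fun y => 1 / y - log (1 + 1 / y)) (-(1 / (x ^ 2 * (x + 1)))) x := by
  have hinv : HasDerivAt (fun y => 1 / y) (-(x ^ 2)⁻¹) x := by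
    simpa only [one_div] using hasDerivAt_inv hx.ne'
  refine (hinv.fun_sub ((hinv.const_add 1).log (by positivity))).congr_deriv ?_
  have : x + 1 ≠ 0 := by positivity
  rw [show 1 + 1 / x = (x + 1) / x by field_simp]
  field_simp
  ring

lemma one_div_sq_mul_add_one_le {c y : ℝ} (hc : 0 < c) (hcy : c ≤ y) :
    1 / (y ^ 2 * (y + 1)) ≤ 1 / c * (1 / y - 1 / (y + 1)) := by
  have hy : 0 < y := hc.trans_le hcy
  rw [show 1 / c * (1 / y - 1 / (y + 1)) = 1 / (c * y * (y + 1)) by field_simp; ring]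
  exact one_div_le_one_div_of_le (by positivity) (by nlinarith)

lemma hasSum_one_div_sub_one_div_add_one (hx : 0 < x) :
    HasSum (fun n : ℕ => 1 / (x + n) - 1 / (x + n + 1)) (1 / x) :=
  hasSum_sub_add_one (f := fun t => 1 / t)
    (fun n => one_div_le_one_div_of_le (by positivity) (by linarith))
    (tendsto_comp_add_nat_of_le_one_div (fun t ht => by have := hx.trans_le ht; positivity)
      fun _ _ => le_rfl)

lemma summable_one_div_sq_mul_add_one (hx : 0 < x) :
    Summable fun n : ℕ => 1 / ((x + n) ^ 2 * (x + n + 1)) :=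
  ((hasSum_one_div_sub_one_div_add_one hx).mul_left (1 / x)).summable.of_nonneg_of_le
    (fun n => by positivity)
    (fun n => one_div_sq_mul_add_one_le hx (le_add_of_nonneg_right n.cast_nonneg))

lemma hasDerivAt_log_sub_digamma_tsum (hx : 0 < x) :
    HasDerivAt (fun y => log y - digamma y)
      (-∑' n : ℕ, 1 / ((x + n) ^ 2 * (x + n + 1))) x := by
  have hc : 0 < x / 2 := by positivity
  have hx' : x ∈ Ioi (x / 2) := by simp only [mem_Ioi]; linarith
  have hseries : HasDerivAt (fun y => ∑' n : ℕ, (1 / (y + n) - log (1 + 1 / (y + n))))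
      (∑' n : ℕ, -(1 / ((x + n) ^ 2 * (x + n + 1)))) x := by
    refine hasDerivAt_tsum_of_isPreconnected
      (g := fun (n : ℕ) y => 1 / (y + n) - log (1 + 1 / (y + n)))
      (g' := fun (n : ℕ) y => -(1 / ((y + n) ^ 2 * (y + n + 1))))
      (summable_one_div_sq_mul_add_one hc) isOpen_Ioi
      isPreconnected_Ioi (fun n y hy => ?_) (fun n y hy => ?_) hx'
      (hasSum_log_sub_digamma hx).summable hx'
    · have : 0 < y := hc.trans hy
      exact (hasDerivAt_one_div_sub_log_one_add_one_div (by positivity)).comp_add_const y n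
    · have : x / 2 < y := hy
      have : 0 < y := hc.trans hy
      rw [norm_neg, Real.norm_of_nonneg (by positivity)]
      exact one_div_le_one_div_of_le (by positivity) (by gcongr)
  rw [tsum_neg] at hseries
  refine hseries.congr_of_eventuallyEq ?_
  filter_upwards [Ioi_mem_nhds hx] with y hy
  exact (hasSum_log_sub_digamma hy).tsum_eq.symm

lemma hasSum_trigamma_sub_one_div (hx : 0 < x) :
    HasSum (fun n : ℕ => 1 / ((x + n) ^ 2 * (x + n + 1))) (trigamma x - 1 / x) := by
  have hψ := (hasDerivAt_log hx.ne').fun_sub (hasDerivAt_log_sub_digamma_tsum hx)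
  simp only [sub_sub_cancel, sub_neg_eq_add] at hψ
  rw [trigamma, hψ.deriv, inv_eq_one_div, add_sub_cancel_left]
  exact (summable_one_div_sq_mul_add_one hx).hasSum

lemma hasDerivAt_log_sub_digamma (hx : 0 < x) :
    HasDerivAt (fun y => log y - digamma y) (-(trigamma x - 1 / x)) x := by
  rw [← (hasSum_trigamma_sub_one_div hx).tsum_eq]
  exact hasDerivAt_log_sub_digamma_tsum hx

lemma trigamma_sub_one_div_sub_add_one (hx : 0 < x) :
    (trigamma x - 1 / x) - (trigamma (x + 1) - 1 / (x + 1)) = 1 / (x ^ 2 * (x + 1)) := by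
  have h := (hasSum_nat_add_iff' 1).mpr (hasSum_trigamma_sub_one_div hx)
  have e : ∀ n : ℕ, x + ((n + 1 : ℕ) : ℝ) = x + 1 + n := fun n => by push_cast; ring
  simp only [e, Finset.sum_range_one, Nat.cast_zero, add_zero] at h
  linarith [h.unique (hasSum_trigamma_sub_one_div (by linarith))]

lemma trigamma_sub_one_div_nonneg (hx : 0 < x) : 0 ≤ trigamma x - 1 / x :=
  (hasSum_trigamma_sub_one_div hx).nonneg fun n => by positivity

lemma trigamma_sub_one_div_le (hx : 0 < x) : trigamma x - 1 / x ≤ 1 / x ^ 2 := by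
  have := hasSum_le (fun n => one_div_sq_mul_add_one_le hx (le_add_of_nonneg_right n.cast_nonneg))
    (hasSum_trigamma_sub_one_div hx) ((hasSum_one_div_sub_one_div_add_one hx).mul_left (1 / x))
  rwa [one_div_mul_one_div, ← sq] at this

end Series

lemma log_one_add_le_pade {u : ℝ} (hu : 0 ≤ u) :
    log (1 + u) ≤ (u + 7/10 * u ^ 2 + 1/30 * u ^ 3) / (1 + 6/5 * u + 3/10 * u ^ 2) := by
  let G : ℝ → ℝ := fun v =>
    (v + 7/10 * v ^ 2 + 1/30 * v ^ 3) / (1 + 6/5 * v + 3/10 * v ^ 2) - log (1 + v)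
  have hG : ∀ v, 0 ≤ v →
      HasDerivAt G (v ^ 5 / (100 * (1 + 6/5 * v + 3/10 * v ^ 2) ^ 2 * (1 + v))) v := by
    intro v hv
    have hP : HasDerivAt (fun w => w + 7/10 * w ^ 2 + 1/30 * w ^ 3)
        (1 + 7/5 * v + 1/10 * v ^ 2) v :=
      (((hasDerivAt_id' v).fun_add ((hasDerivAt_pow 2 v).const_mul (7/10 : ℝ))).fun_add
        ((hasDerivAt_pow 3 v).const_mul (1/30 : ℝ))).congr_deriv (by norm_num; ring)
    have hQ : HasDerivAt (fun w => 1 + 6/5 * w + 3/10 * w ^ 2) (6/5 + 3/5 * v) v :=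
      ((((hasDerivAt_id' v).const_mul (6/5 : ℝ)).const_add 1).fun_add
        ((hasDerivAt_pow 2 v).const_mul (3/10 : ℝ))).congr_deriv (by norm_num; ring)
    refine ((hP.fun_div hQ (by positivity)).fun_sub
      (((hasDerivAt_id' v).const_add 1).log (by positivity))).congr_deriv ?_
    field_simp
    ring
  have hmono : MonotoneOn G (Ici 0) :=
    monotoneOn_of_hasDerivWithinAt_nonneg (convex_Ici 0)
      (fun v hv => (hG v hv).continuousAt.continuousWithinAt)
      (fun v hv => (hG v (interior_subset hv)).hasDerivWithinAt)
      (fun v hv => by have : 0 ≤ v := interior_subset hv; positivity)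
  have := hmono self_mem_Ici hu hu
  simp only [G] at this
  norm_num at this
  linarith

lemma le_one_div_sub_log_one_add_one_div {t : ℝ} (ht : 0 < t) :
    (15 * t + 8) / (3 * t * (10 * t ^ 2 + 12 * t + 3)) ≤ 1 / t - log (1 + 1 / t) := by
  have hpade := log_one_add_le_pade (u := 1 / t) (by positivity)
  have hW : (1 / t + 7/10 * (1 / t) ^ 2 + 1/30 * (1 / t) ^ 3)
      / (1 + 6/5 * (1 / t) + 3/10 * (1 / t) ^ 2)
      = 1 / t - (15 * t + 8) / (3 * t * (10 * t ^ 2 + 12 * t + 3)) := by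
    field_simp
    ring
  linarith

noncomputable def logSubDigammaLowerBound (t : ℝ) : ℝ :=
  (1065964013/300000 + 1198890541/157500 * t + 128293103/18000 * t ^ 2 + 10642799/3000 * t ^ 3
      + 40273/40 * t ^ 4 + 490/3 * t ^ 5 + 169/12 * t ^ 6 + 1/2 * t ^ 7)
    / (t * (t + 1) * (t + 2) * (t + 3) * (t + 4) * (t + 5) * (t + 6) * (t + 7))

noncomputable def trigammaSubOneDivUpperBound (t : ℝ) : ℝ :=
  (38320128 + 83953440 * t + 7127566252/77 * t ^ 2 + 2107274752/35 * t ^ 3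
      + 378138788/15 * t ^ 4 + 99515823/14 * t ^ 5 + 19295995/14 * t ^ 6 + 1841543/10 * t ^ 7
      + 83279/5 * t ^ 8 + 1947/2 * t ^ 9 + 199/6 * t ^ 10 + 1/2 * t ^ 11)
    / (t ^ 2 * (t + 1) * (t + 2) * (t + 3) * (t + 4) * (t + 5) * (t + 6) * (t + 7) * (t + 8)
      * (t + 9) * (t + 10) * (t + 11))

section Certificates

/- After the substitution `t = 1 + s`, each of the polynomial inequalities below has only
positive coefficients in `s`. -/

variable {t : ℝ}

lemma logSubDigammaLowerBound_pos (ht : 0 < t) : 0 < logSubDigammaLowerBound t := by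
  unfold logSubDigammaLowerBound
  positivity

lemma trigammaSubOneDivUpperBound_nonneg (ht : 0 < t) : 0 ≤ trigammaSubOneDivUpperBound t := by
  unfold trigammaSubOneDivUpperBound
  positivity

lemma logSubDigammaLowerBound_le_one_div (ht : 1 ≤ t) : logSubDigammaLowerBound t ≤ 1 / t := by
  obtain ⟨s, hs, rfl⟩ : ∃ s, 0 ≤ s ∧ t = 1 + s := ⟨t - 1, by linarith, by ring⟩
  unfold logSubDigammaLowerBound
  rw [div_le_div_iff₀ (by positivity) (by positivity), ← sub_nonneg]
  ring_nf
  positivity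

lemma trigammaSubOneDivUpperBound_le_one_div (ht : 1 ≤ t) :
    trigammaSubOneDivUpperBound t ≤ 1 / t := by
  obtain ⟨s, hs, rfl⟩ : ∃ s, 0 ≤ s ∧ t = 1 + s := ⟨t - 1, by linarith, by ring⟩
  unfold trigammaSubOneDivUpperBound
  rw [div_le_div_iff₀ (by positivity) (by positivity), ← sub_nonneg]
  ring_nf
  positivity

lemma logSubDigammaLowerBound_sub_add_one_le (ht : 1 ≤ t) :
    logSubDigammaLowerBound t - logSubDigammaLowerBound (t + 1)
      ≤ (15 * t + 8) / (3 * t * (10 * t ^ 2 + 12 * t + 3)) := by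
  obtain ⟨s, hs, rfl⟩ : ∃ s, 0 ≤ s ∧ t = 1 + s := ⟨t - 1, by linarith, by ring⟩
  unfold logSubDigammaLowerBound
  rw [div_sub_div _ _ (by positivity) (by positivity),
    div_le_div_iff₀ (by positivity) (by positivity), ← sub_nonneg]
  ring_nf
  positivity

lemma le_trigammaSubOneDivUpperBound_sub_add_one (ht : 1 ≤ t) :
    1 / (t ^ 2 * (t + 1))
      ≤ trigammaSubOneDivUpperBound t - trigammaSubOneDivUpperBound (t + 1) := by
  obtain ⟨s, hs, rfl⟩ : ∃ s, 0 ≤ s ∧ t = 1 + s := ⟨t - 1, by linarith, by ring⟩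
  unfold trigammaSubOneDivUpperBound
  rw [div_sub_div _ _ (by positivity) (by positivity),
    div_le_div_iff₀ (by positivity) (by positivity), ← sub_nonneg]
  ring_nf
  positivity

lemma trigammaSubOneDivUpperBound_lt (ht : 1 ≤ t) :
    trigammaSubOneDivUpperBound t < 2 * logSubDigammaLowerBound t ^ 2 := by
  obtain ⟨s, hs, rfl⟩ : ∃ s, 0 ≤ s ∧ t = 1 + s := ⟨t - 1, by linarith, by ring⟩
  unfold trigammaSubOneDivUpperBound logSubDigammaLowerBound
  rw [div_pow, ← mul_div_assoc, div_lt_div_iff₀ (by positivity) (by positivity), ← sub_pos]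
  ring_nf
  positivity

end Certificates

section Comparison

variable {x : ℝ}

lemma logSubDigammaLowerBound_le_log_sub_digamma (hx : 1 ≤ x) :
    logSubDigammaLowerBound x ≤ log x - digamma x := by
  have hge : ∀ n : ℕ, 1 ≤ x + n := fun n => le_add_of_le_of_nonneg hx n.cast_nonneg
  have hB : Tendsto (fun n : ℕ => logSubDigammaLowerBound (x + n)) atTop (𝓝 0) :=
    tendsto_comp_add_nat_of_le_one_div
      (fun t ht => (logSubDigammaLowerBound_pos (by linarith)).le)
      fun t ht => logSubDigammaLowerBound_le_one_div (by linarith)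
  have hL : Tendsto (fun n : ℕ => log (x + n) - digamma (x + n)) atTop (𝓝 0) :=
    tendsto_comp_add_nat_of_le_one_div (f := fun t => log t - digamma t)
      (fun t ht => log_sub_digamma_nonneg (by linarith))
      fun t ht => log_sub_digamma_le (by linarith)
  refine le_of_sub_add_one_le_sub_add_one (f := logSubDigammaLowerBound)
    (g := fun t => log t - digamma t) (fun n => ?_) hB hL
  show _ ≤ log (x + n) - digamma (x + n) - (log (x + n + 1) - digamma (x + n + 1))
  rw [log_sub_digamma_sub_add_one (by linarith [hge n])]
  exact (logSubDigammaLowerBound_sub_add_one_le (hge n)).trans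
    (le_one_div_sub_log_one_add_one_div (by linarith [hge n]))

lemma trigamma_sub_one_div_le_trigammaSubOneDivUpperBound (hx : 1 ≤ x) :
    trigamma x - 1 / x ≤ trigammaSubOneDivUpperBound x := by
  have hge : ∀ n : ℕ, 1 ≤ x + n := fun n => le_add_of_le_of_nonneg hx n.cast_nonneg
  have hT : Tendsto (fun n : ℕ => trigamma (x + n) - 1 / (x + n)) atTop (𝓝 0) :=
    tendsto_comp_add_nat_of_le_one_div (f := fun t => trigamma t - 1 / t)
      (fun t ht => trigamma_sub_one_div_nonneg (by linarith))
      fun t ht => (trigamma_sub_one_div_le (by linarith)).trans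
        (one_div_le_one_div_of_le (by linarith) (by nlinarith))
  have hB : Tendsto (fun n : ℕ => trigammaSubOneDivUpperBound (x + n)) atTop (𝓝 0) :=
    tendsto_comp_add_nat_of_le_one_div
      (fun t ht => trigammaSubOneDivUpperBound_nonneg (by linarith))
      fun t ht => trigammaSubOneDivUpperBound_le_one_div (by linarith)
  refine le_of_sub_add_one_le_sub_add_one (f := fun t => trigamma t - 1 / t)
    (g := trigammaSubOneDivUpperBound) (fun n => ?_) hT hB
  show trigamma (x + n) - 1 / (x + n) - (trigamma (x + n + 1) - 1 / (x + n + 1)) ≤ _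
  rw [trigamma_sub_one_div_sub_add_one (by linarith [hge n])]
  exact le_trigammaSubOneDivUpperBound_sub_add_one (hge n)

lemma log_sub_digamma_pos (hx : 1 ≤ x) : 0 < log x - digamma x :=
  (logSubDigammaLowerBound_pos (by linarith)).trans_le
    (logSubDigammaLowerBound_le_log_sub_digamma hx)

lemma trigamma_sub_one_div_lt_two_mul_sq (hx : 1 ≤ x) :
    trigamma x - 1 / x < 2 * (log x - digamma x) ^ 2 := by
  have hpos := logSubDigammaLowerBound_pos (by linarith : 0 < x)
  calc trigamma x - 1 / x ≤ trigammaSubOneDivUpperBound x :=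
        trigamma_sub_one_div_le_trigammaSubOneDivUpperBound hx
    _ < 2 * logSubDigammaLowerBound x ^ 2 := trigammaSubOneDivUpperBound_lt hx
    _ ≤ 2 * (log x - digamma x) ^ 2 := by
        gcongr
        exact logSubDigammaLowerBound_le_log_sub_digamma hx

end Comparison

theorem f1_strictAnti :
    StrictAntiOn (fun x : ℝ => 1 / (Real.log x - digamma x) - 2 * x) (Set.Ioi 1) := by
  have hderiv : ∀ x ∈ Ioi (1 : ℝ), HasDerivAt (fun x : ℝ => 1 / (Real.log x - digamma x) - 2 * x)
      ((trigamma x - 1 / x) / (log x - digamma x) ^ 2 - 2) x := by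
    intro x hx
    have hL := hasDerivAt_log_sub_digamma (by linarith [mem_Ioi.1 hx] : 0 < x)
    exact (((hasDerivAt_const x (1 : ℝ)).fun_div hL (log_sub_digamma_pos hx.le).ne').fun_sub
      ((hasDerivAt_id' x).const_mul 2)).congr_deriv (by ring)
  refine strictAntiOn_of_hasDerivWithinAt_neg (convex_Ioi 1)
    (fun x hx => (hderiv x hx).continuousAt.continuousWithinAt)
    (fun x hx => (hderiv x (interior_subset hx)).hasDerivWithinAt) fun x hx => ?_
  rw [interior_Ioi] at hx
  rw [sub_neg, div_lt_iff₀ (pow_pos (log_sub_digamma_pos hx.le) 2)]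
  exact trigamma_sub_one_div_lt_two_mul_sq hx.le
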